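/- Let c > 0 be a real number and O : V → V an orthogonal linear map, and set J' = c·O∘J∘O⁻¹ (which is again skew-adjoint). Then the linear map φ(v, v⁻, v⁺) = (Ov, v⁻/c, c·v⁺) is a Lie algebra isomorphism from 𝔡_J to 𝔡_{J'} which preserves the invariant scalar product: B₀(φ(x), φ(y)) = B₀(x, y) for all x, y. (Hence a positive rescaling of J and an orthogonal conjugation of J can be absorbed into reciprocal rescalings of the two distinguished directions.) -/
import Mathlib


open scoped RealInnerProductSpace

/-- The bracket of the double extension `𝔡_J = 𝔡(V,ℝ)` on `V × ℝ × ℝ`, elements written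
`(v, v⁻, v⁺)`: `[(v,v⁻,v⁺),(w,w⁻,w⁺)] = (v⁻·Jw − w⁻·Jv, 0, ⟨Jv, w⟩)`. -/
def dJBracket {V : Type*} [NormedAddCommGroup V] [InnerProductSpace ℝ V]
    (J : V →ₗ[ℝ] V) (x y : V × ℝ × ℝ) : V × ℝ × ℝ :=
  (x.2.1 • J y.1 - y.2.1 • J x.1, 0, ⟪J x.1, y.1⟫)

/-- The symmetric bilinear form `B_β` on `𝔡_J`:
`B_β((v,v⁻,v⁺),(w,w⁻,w⁺)) = ⟨v,w⟩ + v⁺·w⁻ + w⁺·v⁻ + β·v⁻·w⁻`. -/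
def dJForm {V : Type*} [NormedAddCommGroup V] [InnerProductSpace ℝ V]
    (β : ℝ) (x y : V × ℝ × ℝ) : ℝ :=
  ⟪x.1, y.1⟫ + x.2.2 * y.2.1 + y.2.2 * x.2.1 + β * x.2.1 * y.2.1

/-- For `c > 0` and `O : V → V` orthogonal, set `J' = c·O∘J∘O⁻¹` (again skew-adjoint).
Then `φ(v, v⁻, v⁺) = (Ov, v⁻/c, c·v⁺)` is a Lie algebra isomorphism `𝔡_J → 𝔡_{J'}`
preserving the invariant scalar product `B₀`.  (Hence a positive rescaling and an
orthogonal conjugation of `J` can be absorbed into reciprocal rescalings of the two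
distinguished directions.) -/
theorem dJ_rescaling_isomorphism
    {V : Type*} [NormedAddCommGroup V] [InnerProductSpace ℝ V] [FiniteDimensional ℝ V]
    (J : V →ₗ[ℝ] V) (hJ : ∀ v w : V, ⟪J v, w⟫ = -⟪v, J w⟫)
    (c : ℝ) (hc : 0 < c) (O : V ≃ₗᵢ[ℝ] V)
    (J' : V →ₗ[ℝ] V) (hJ' : ∀ v : V, J' v = c • O (J (O.symm v))) :
    let φ : V × ℝ × ℝ → V × ℝ × ℝ := fun x => (O x.1, x.2.1 / c, c * x.2.2)
    (∀ v w : V, ⟪J' v, w⟫ = -⟪v, J' w⟫) ∧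
    (∀ x y : V × ℝ × ℝ, φ (x + y) = φ x + φ y) ∧
    (∀ (r : ℝ) (x : V × ℝ × ℝ), φ (r • x) = r • φ x) ∧
    Function.Bijective φ ∧
    (∀ x y : V × ℝ × ℝ, φ (dJBracket J x y) = dJBracket J' (φ x) (φ y)) ∧
    (∀ x y : V × ℝ × ℝ, dJForm 0 (φ x) (φ y) = dJForm 0 x y) := by

  intro φ
  have hc' : c ≠ 0 := ne_of_gt hc
  refine ⟨?_, ?_, ?_, ?_, ?_, ?_⟩
  · intro v w
    rw [hJ' v, hJ' w]
    rw [real_inner_smul_left, real_inner_smul_right]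
    have h1 : ⟪O (J (O.symm v)), w⟫ = ⟪J (O.symm v), O.symm w⟫ := by
      conv_lhs => rw [← O.apply_symm_apply w]
      rw [O.inner_map_map]
    have h2 : ⟪v, O (J (O.symm w))⟫ = ⟪O.symm v, J (O.symm w)⟫ := by
      conv_lhs => rw [← O.apply_symm_apply v]
      rw [O.inner_map_map]
    rw [h1, h2, hJ]
    ring
  · intro x y
    simp only [φ, Prod.fst_add, Prod.snd_add, map_add, Prod.mk_add_mk]
    ring_nf
  · intro r x
    simp only [φ, Prod.smul_fst, Prod.smul_snd, map_smul, Prod.smul_mk, smul_eq_mul]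
    simp only [Prod.mk.injEq]
    exact ⟨trivial, by ring, by ring⟩
  · constructor
    · intro x y h
      simp only [φ, Prod.mk.injEq] at h
      obtain ⟨h1, h2, h3⟩ := h
      have := O.injective h1
      ext
      · exact this
      · field_simp at h2; exact h2
      · exact mul_left_cancel₀ hc' h3
    · intro y
      exact ⟨(O.symm y.1, c * y.2.1, y.2.2 / c), by
        simp only [φ, O.apply_symm_apply]
        ext <;> simp <;> field_simp⟩
  · intro x y
    simp only [φ, dJBracket, hJ', Prod.mk.injEq]
    refine ⟨?_, by ring, ?_⟩
    · simp only [O.symm_apply_apply, map_sub, map_smul, smul_smul, smul_sub]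
      rw [mul_comm (x.2.1/c) c, mul_comm (y.2.1/c) c]
      field_simp
    · rw [real_inner_smul_left, O.symm_apply_apply, O.inner_map_map]
  · intro x y
    simp only [φ, dJForm, O.inner_map_map]
    field_simp
    ring
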